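/- κ̂(1) = 0, and μ·κ̂(μ) is asymptotically equivalent to log μ as μ → ∞, i.e., lim_{μ→∞} μ·κ̂(μ) / log μ = 1. -/

import Mathlib

open Filter

/-- The variational functional `f_μ(δ,ε)` (convention `0 log 0 = 0`, automatic
since `Real.log 0 = 0`). -/
noncomputable def fmu (μ : ℝ) (p : ℝ × ℝ) : ℝ :=
  -2 * p.1 * Real.log p.1 - 2 * p.2 * Real.log p.2
    - (1 - p.1 - p.2) * Real.log (1 - p.1 - p.2)
    - ((μ - 1) / 2 - p.1) * Real.log ((μ - 1) / 2 - p.1)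
    - ((μ - 1) / 2 - p.2) * Real.log ((μ - 1) / 2 - p.2)
    + (μ - 1) * Real.log ((μ - 1) / 2)

/-- The domain `D_μ` of `f_μ`. -/
def Dmu (μ : ℝ) : Set (ℝ × ℝ) :=
  {p | 0 ≤ p.1 ∧ 0 ≤ p.2 ∧ p.1 + p.2 ≤ 1 ∧ p.1 ≤ (μ - 1) / 2 ∧ p.2 ≤ (μ - 1) / 2}

/-- The interface entropy per step `κ̂(μ) = (1/μ) · sup_{(δ,ε) ∈ D_μ} f_μ(δ,ε)`. -/
noncomputable def kappaHat (μ : ℝ) : ℝ := (1 / μ) * sSup (fmu μ '' Dmu μ)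

/-!
For `μ ≥ 3` put `m = (μ - 1)/2`. The three entropy terms `-x log x` of `f_μ` are at most `1`
each, and `m log m - (m - δ) log (m - δ)` lies between `δ log m` and `δ (log m + 1)` (the
derivative of `x log x` is `log x + 1`). Since `δ + ε ≤ 1` this gives
`log m ≤ f_μ(1, 0) ≤ sup f_μ ≤ log m + 6`, and `log m ∼ log μ`.
-/

open Real

lemma neg_mul_log_le_one {x : ℝ} (hx : 0 ≤ x) : -(x * log x) ≤ 1 := by
  have h := negMulLog_le_one_sub_self hx
  rw [negMulLog_eq_neg] at h
  linarith

lemma mul_log_sub_mul_log_sub_le {m δ : ℝ} (hδ₀ : 0 ≤ δ) (hδm : δ ≤ m) :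
    m * log m - (m - δ) * log (m - δ) ≤ δ * (log m + 1) := by
  rcases hδm.lt_or_eq with hδm | rfl
  · have hmδ : 0 < m - δ := by linarith
    have h := mul_le_mul_of_nonneg_left
      (log_le_sub_one_of_pos (div_pos (by linarith) hmδ)) hmδ.le
    have hδ : (m - δ) * (m / (m - δ) - 1) = δ := by field_simp; ring
    rw [log_div (by linarith) hmδ.ne', hδ] at h
    nlinarith
  · simp only [sub_self, log_zero, mul_zero, sub_zero]
    nlinarith

lemma mul_log_le_mul_log_sub_mul_log_sub {m δ : ℝ} (hδ₀ : 0 ≤ δ) (hδm : δ ≤ m) :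
    δ * log m ≤ m * log m - (m - δ) * log (m - δ) := by
  rcases hδm.lt_or_eq with hδm | rfl
  · have : (m - δ) * log (m - δ) ≤ (m - δ) * log m :=
      mul_le_mul_of_nonneg_left (log_le_log (by linarith) (by linarith)) (by linarith)
    nlinarith
  · simp

lemma one_zero_mem_Dmu {μ : ℝ} (hμ : 3 ≤ μ) : ((1 : ℝ), (0 : ℝ)) ∈ Dmu μ := by
  refine ⟨?_, ?_, ?_, ?_, ?_⟩ <;> dsimp only <;> linarith

lemma fmu_le {μ : ℝ} (hμ : 3 ≤ μ) {p : ℝ × ℝ} (hp : p ∈ Dmu μ) :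
    fmu μ p ≤ log ((μ - 1) / 2) + 6 := by
  obtain ⟨hδ, hε, hδε, hδm, hεm⟩ := hp
  have hlog : 0 ≤ log ((μ - 1) / 2) := log_nonneg (by linarith)
  have := neg_mul_log_le_one hδ
  have := neg_mul_log_le_one hε
  have := neg_mul_log_le_one (x := 1 - p.1 - p.2) (by linarith)
  have := mul_log_sub_mul_log_sub_le hδ hδm
  have := mul_log_sub_mul_log_sub_le hε hεm
  unfold fmu
  nlinarith

lemma log_le_fmu_one_zero {μ : ℝ} (hμ : 3 ≤ μ) :
    log ((μ - 1) / 2) ≤ fmu μ ((1 : ℝ), (0 : ℝ)) := by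
  have h := mul_log_le_mul_log_sub_mul_log_sub (m := (μ - 1) / 2) zero_le_one (by linarith)
  simp only [fmu, log_one, log_zero, sub_zero, sub_self, mul_zero]
  linarith

lemma sSup_fmu_mem_Icc {μ : ℝ} (hμ : 3 ≤ μ) :
    sSup (fmu μ '' Dmu μ) ∈ Set.Icc (log ((μ - 1) / 2)) (log ((μ - 1) / 2) + 6) := by
  have hub : log ((μ - 1) / 2) + 6 ∈ upperBounds (fmu μ '' Dmu μ) := by
    rintro _ ⟨p, hp, rfl⟩
    exact fmu_le hμ hp
  have hmem : fmu μ (1, 0) ∈ fmu μ '' Dmu μ := ⟨_, one_zero_mem_Dmu hμ, rfl⟩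
  exact ⟨(log_le_fmu_one_zero hμ).trans (le_csSup ⟨_, hub⟩ hmem), csSup_le ⟨_, hmem⟩ hub⟩

lemma Dmu_one : Dmu 1 = {(0, 0)} := by
  ext ⟨δ, ε⟩
  simp only [Dmu, Set.mem_ofPred_eq, Set.mem_singleton_iff, Prod.mk.injEq]
  constructor
  · rintro ⟨hδ, hε, -, hδ', hε'⟩
    norm_num at hδ' hε'
    exact ⟨le_antisymm hδ' hδ, le_antisymm hε' hε⟩
  · rintro ⟨rfl, rfl⟩
    norm_num

lemma kappaHat_one : kappaHat 1 = 0 := by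
  simp [kappaHat, Dmu_one, fmu]

lemma mul_kappaHat {μ : ℝ} (hμ : μ ≠ 0) : μ * kappaHat μ = sSup (fmu μ '' Dmu μ) := by
  rw [kappaHat, ← mul_assoc, mul_one_div_cancel hμ, one_mul]

lemma tendsto_div_log_of_tendsto_sub_log {g : ℝ → ℝ} {c : ℝ}
    (hg : Tendsto (fun μ ↦ g μ - log μ) atTop (nhds c)) :
    Tendsto (fun μ ↦ g μ / log μ) atTop (nhds 1) := by
  have h := (hg.mul tendsto_log_atTop.inv_tendsto_atTop).const_add 1
  rw [mul_zero, add_zero] at h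
  refine h.congr' ?_
  filter_upwards [eventually_gt_atTop 1] with μ hμ
  rw [Pi.inv_apply, sub_mul, mul_inv_cancel₀ (log_pos hμ).ne', div_eq_mul_inv]
  ring

lemma tendsto_log_half_sub_one_add_div_log (c : ℝ) :
    Tendsto (fun μ ↦ (log ((μ - 1) / 2) + c) / log μ) atTop (nhds 1) := by
  refine tendsto_div_log_of_tendsto_sub_log (c := 0 - log 2 + c) ?_
  refine (((tendsto_log_comp_add_sub_log (-1)).sub_const (log 2)).add_const c).congr' ?_
  filter_upwards [eventually_gt_atTop 1] with μ hμ
  rw [log_div (by linarith) two_ne_zero, ← sub_eq_add_neg]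
  ring

theorem stmt9 :
    kappaHat 1 = 0 ∧
    Tendsto (fun μ : ℝ => μ * kappaHat μ / Real.log μ) atTop (nhds 1) := by
  refine ⟨kappaHat_one, ?_⟩
  have hbounds : ∀ᶠ μ in atTop, (log ((μ - 1) / 2) + 0) / log μ ≤ μ * kappaHat μ / log μ ∧
      μ * kappaHat μ / log μ ≤ (log ((μ - 1) / 2) + 6) / log μ := by
    filter_upwards [eventually_ge_atTop 3] with μ hμ
    have hlog : 0 ≤ log μ := log_nonneg (by linarith)
    obtain ⟨hlo, hhi⟩ := sSup_fmu_mem_Icc hμ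
    rw [mul_kappaHat (by positivity), add_zero]
    exact ⟨by gcongr, by gcongr⟩
  exact tendsto_of_tendsto_of_tendsto_of_le_of_le' (tendsto_log_half_sub_one_add_div_log 0)
    (tendsto_log_half_sub_one_add_div_log 6) (hbounds.mono fun _ ↦ And.left)
    (hbounds.mono fun _ ↦ And.right)
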